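/- arXiv:2005.12204 — 6 statements merged into one kernel-verified Lean document; each statement's English description precedes it below -/
import Mathlib

section
/- If X is a separable metric space and g ∈ Isom(X) has a dense conjugacy class in Isom(X) (with the pointwise convergence topology), then the translation length of g is zero. -/
/-- If `X` is a separable metric space and `g ∈ Isom(X)` has a dense conjugacy class
(for the topology of pointwise convergence on the isometry group), then the
translation length of `g` is zero. -/
theorem translation_length_eq_zero_of_dense_conjugacy_class
    {X : Type*} [MetricSpace X] [Nonempty X] [TopologicalSpace.SeparableSpace X]
    (g : X ≃ᵢ X)
    (hdense : @Dense (X ≃ᵢ X)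
      (TopologicalSpace.induced (fun f : X ≃ᵢ X => (f : X → X)) Pi.topologicalSpace)
      {f : X ≃ᵢ X | ∃ h : X ≃ᵢ X, f = h * g * h⁻¹}) :
    (⨅ x : X, dist (g x) x) = 0 := by
  obtain ⟨x₀⟩ := ‹Nonempty X›
  have hbdd : BddBelow (Set.range fun x : X => dist (g x) x) := by
    refine ⟨0, ?_⟩
    rintro r ⟨x, rfl⟩
    exact dist_nonneg
  have key : ∀ ε : ℝ, 0 < ε → ∃ x : X, dist (g x) x < ε := by
    intro ε hε
    letI T : TopologicalSpace (X ≃ᵢ X) :=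
      TopologicalSpace.induced (fun f : X ≃ᵢ X => (f : X → X)) Pi.topologicalSpace
    have h1 : (1 : X ≃ᵢ X) ∈ closure {f : X ≃ᵢ X | ∃ h : X ≃ᵢ X, f = h * g * h⁻¹} :=
      hdense 1
    set O : Set (X ≃ᵢ X) :=
      (fun f : X ≃ᵢ X => (f : X → X)) ⁻¹' {u : X → X | u x₀ ∈ Metric.ball x₀ ε} with hO
    have hOopen : IsOpen O :=
      ((Metric.isOpen_ball).preimage (continuous_apply x₀)).preimage continuous_induced_dom
    have h1O : (1 : X ≃ᵢ X) ∈ O := by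
      simp [hO, hε]
    obtain ⟨f, hfO, h, rfl⟩ := mem_closure_iff.mp h1 O hOopen h1O
    refine ⟨h⁻¹ x₀, ?_⟩
    have : dist ((h * g * h⁻¹) x₀) x₀ < ε := hfO
    have heq : dist ((h * g * h⁻¹) x₀) x₀ = dist (g (h⁻¹ x₀)) (h⁻¹ x₀) := by
      have : ((h * g * h⁻¹) x₀) = h (g (h⁻¹ x₀)) := rfl
      rw [this, ← h.dist_eq (g (h⁻¹ x₀)) (h⁻¹ x₀)]
      congr 1
      exact (h.apply_symm_apply x₀).symm
    rwa [heq] at this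
  refine le_antisymm ?_ ?_
  · by_contra hlt
    push_neg at hlt
    obtain ⟨x, hx⟩ := key _ hlt
    exact absurd (ciInf_le hbdd x) (not_le.mpr hx)
  · exact le_ciInf fun x => dist_nonneg
end

section
/- The group isomorphism Isom(H) ≅ O(H) ⋉ H is a homeomorphism between the pointwise convergence topology on Isom(H) and the product of the strong operator topology on O(H) and the norm topology on H. -/
abbrev IsometryEquiv.pointwiseTopology (α : Type*) [PseudoEMetricSpace α] :
    TopologicalSpace (α ≃ᵢ α) :=
  TopologicalSpace.induced (fun f : α ≃ᵢ α => (f : α → α)) Pi.topologicalSpace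

/-- The strong operator topology on `E ≃ₗᵢ[R] E`. -/
abbrev LinearIsometryEquiv.pointwiseTopology (R E : Type*) [Semiring R]
    [SeminormedAddCommGroup E] [Module R E] : TopologicalSpace (E ≃ₗᵢ[R] E) :=
  TopologicalSpace.induced (fun ρ : E ≃ₗᵢ[R] E => (ρ : E → E)) Pi.topologicalSpace

attribute [local instance] IsometryEquiv.pointwiseTopology
  LinearIsometryEquiv.pointwiseTopology

theorem LinearIsometryEquiv.continuous_apply_pointwise {R E : Type*} [Semiring R]
    [SeminormedAddCommGroup E] [Module R E] (x : E) : Continuous fun ρ : E ≃ₗᵢ[R] E => ρ x :=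
  (continuous_apply x).comp continuous_induced_dom

namespace IsometryEquiv

theorem continuous_apply_pointwise {α : Type*} [PseudoEMetricSpace α] (x : α) :
    Continuous fun f : α ≃ᵢ α => f x :=
  (continuous_apply x).comp continuous_induced_dom

variable {E : Type*} [NormedAddCommGroup E] [NormedSpace ℝ E]

/-- By the Mazur–Ulam theorem every isometry `f` of `E` is `x ↦ ρ x + f 0` with `ρ` linear. -/
noncomputable def linearIsometryEquivProdEquiv : (E ≃ₗᵢ[ℝ] E) × E ≃ (E ≃ᵢ E) where
  toFun p := p.1.toIsometryEquiv.trans (IsometryEquiv.addRight p.2)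
  invFun f := (f.toRealLinearIsometryEquiv, f 0)
  left_inv := by
    rintro ⟨ρ, v⟩
    ext x <;> simp
  right_inv f := by
    ext x
    simp [toRealLinearIsometryEquiv_apply]

theorem linearIsometryEquivProdEquiv_apply (ρ : E ≃ₗᵢ[ℝ] E) (v x : E) :
    linearIsometryEquivProdEquiv (ρ, v) x = ρ x + v :=
  rfl

theorem continuous_linearIsometryEquivProdEquiv :
    Continuous (linearIsometryEquivProdEquiv : (E ≃ₗᵢ[ℝ] E) × E → E ≃ᵢ E) :=
  continuous_induced_rng.2 <| continuous_pi fun x =>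
    ((LinearIsometryEquiv.continuous_apply_pointwise x).comp continuous_fst).add continuous_snd

theorem continuous_toRealLinearIsometryEquiv :
    Continuous (toRealLinearIsometryEquiv : E ≃ᵢ E → E ≃ₗᵢ[ℝ] E) := by
  refine continuous_induced_rng.2 (continuous_pi fun x => ?_)
  have h : Continuous fun f : E ≃ᵢ E => f x - f 0 :=
    (continuous_apply_pointwise x).sub (continuous_apply_pointwise 0)
  simpa only [Function.comp_apply, toRealLinearIsometryEquiv_apply] using h

noncomputable def linearIsometryEquivProdHomeomorph : (E ≃ₗᵢ[ℝ] E) × E ≃ₜ (E ≃ᵢ E) where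
  toEquiv := linearIsometryEquivProdEquiv
  continuous_toFun := continuous_linearIsometryEquivProdEquiv
  continuous_invFun :=
    continuous_toRealLinearIsometryEquiv.prodMk (continuous_apply_pointwise 0)

end IsometryEquiv

theorem isom_hilbert_homeomorph_orthogonal_prod_translations_general
    {H : Type*} [NormedAddCommGroup H] [InnerProductSpace ℝ H] :
    letI : TopologicalSpace (H ≃ₗᵢ[ℝ] H) :=
      TopologicalSpace.induced (fun ρ : H ≃ₗᵢ[ℝ] H => (ρ : H → H)) Pi.topologicalSpace
    letI : TopologicalSpace (H ≃ᵢ H) :=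
      TopologicalSpace.induced (fun f : H ≃ᵢ H => (f : H → H)) Pi.topologicalSpace
    ∃ e : (H ≃ₗᵢ[ℝ] H) × H ≃ₜ (H ≃ᵢ H),
      ∀ (ρ : H ≃ₗᵢ[ℝ] H) (v x : H), e (ρ, v) x = ρ x + v :=
  ⟨IsometryEquiv.linearIsometryEquivProdHomeomorph,
    IsometryEquiv.linearIsometryEquivProdEquiv_apply⟩

/-- The group isomorphism `Isom(H) ≅ O(H) ⋉ H`, `(ρ, v) ↦ (x ↦ ρ x + v)`, is a
homeomorphism between the product of the strong operator topology on `O(H)` with the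
norm topology on `H`, and the topology of pointwise convergence on `Isom(H)`. -/
theorem isom_hilbert_homeomorph_orthogonal_prod_translations
    {H : Type*} [NormedAddCommGroup H] [InnerProductSpace ℝ H] [CompleteSpace H]
    [TopologicalSpace.SeparableSpace H] :
    letI : TopologicalSpace (H ≃ₗᵢ[ℝ] H) :=
      TopologicalSpace.induced (fun ρ : H ≃ₗᵢ[ℝ] H => (ρ : H → H)) Pi.topologicalSpace
    letI : TopologicalSpace (H ≃ᵢ H) :=
      TopologicalSpace.induced (fun f : H ≃ᵢ H => (f : H → H)) Pi.topologicalSpace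
    ∃ e : (H ≃ₗᵢ[ℝ] H) × H ≃ₜ (H ≃ᵢ H),
      ∀ (ρ : H ≃ₗᵢ[ℝ] H) (v x : H), e (ρ, v) x = ρ x + v :=
  isom_hilbert_homeomorph_orthogonal_prod_translations_general
end

section
/- In the topology 𝒯_c on the closed unit ball D̄ (the projective/Klein model of the hyperbolic space and its boundary), the collection of open half-spaces forms a base: any finite intersection of open half-spaces with nonempty intersection with D̄ contains an open half-space meeting D̄. -/
/-!
Take a point `x₀` of the ball in the given intersection. In infinite dimension there is
a unit vector orthogonal to `x₀` and to all the normals `uᵢ`; moving `x₀` along it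
reaches a point `y` of the unit sphere with the same inner products against every `uᵢ`,
so `y` lies in the norm-open set `S = ⋂ᵢ {cᵢ < ⟪x, uᵢ⟫}` together with a ball `B(y, r)`.
The cap `{x ∈ D̄ : ⟪x, y⟫ > 1 - r² / 2}` contains `y` and lies in `B(y, r)`, since
`‖x - y‖² = ‖x‖² - 2⟪x, y⟫ + 1 ≤ 2 - 2⟪x, y⟫`.
-/

open Set Metric
open scoped RealInnerProductSpace

section

variable {E : Type*} [NormedAddCommGroup E] [InnerProductSpace ℝ E]

theorem Submodule.exists_norm_eq_one_mem_orthogonal (hinf : ¬ FiniteDimensional ℝ E)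
    (K : Submodule ℝ E) [FiniteDimensional ℝ K] : ∃ w ∈ Kᗮ, ‖w‖ = 1 := by
  have hK : Kᗮ ≠ ⊥ := fun h ↦ by
    rw [Submodule.orthogonal_eq_bot_iff] at h
    exact hinf (Module.Finite.equiv (h ▸ Submodule.topEquiv))
  obtain ⟨w, hw, hw0⟩ := Submodule.exists_mem_ne_zero_of_ne_bot hK
  exact ⟨(‖w‖⁻¹ : ℝ) • w, Kᗮ.smul_mem _ hw, norm_smul_inv_norm hw0⟩

theorem exists_norm_eq_one_forall_inner_eq (hinf : ¬ FiniteDimensional ℝ E) {ι : Type*}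
    [Finite ι] (u : ι → E) {x : E} (hx : ‖x‖ ≤ 1) :
    ∃ y : E, ‖y‖ = 1 ∧ ∀ i, ⟪y, u i⟫ = ⟪x, u i⟫ := by
  set K := Submodule.span ℝ (insert x (range u))
  have : FiniteDimensional ℝ K :=
    FiniteDimensional.span_of_finite ℝ ((finite_range u).insert x)
  obtain ⟨w, hwK, hw⟩ := K.exists_norm_eq_one_mem_orthogonal hinf
  have hw_orth : ∀ v ∈ insert x (range u), ⟪w, v⟫ = 0 := fun v hv ↦
    Submodule.inner_left_of_mem_orthogonal (Submodule.subset_span hv) hwK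
  set t := √(1 - ‖x‖ ^ 2)
  refine ⟨x + t • w, ?_, fun i ↦ ?_⟩
  · have ht : t ^ 2 = 1 - ‖x‖ ^ 2 := Real.sq_sqrt (by nlinarith [norm_nonneg x])
    rw [← pow_eq_one_iff_of_nonneg (norm_nonneg _) two_ne_zero, norm_add_sq_real,
      real_inner_smul_right, real_inner_comm, hw_orth x (mem_insert _ _), norm_smul, hw,
      mul_one, Real.norm_eq_abs, sq_abs, ht]
    ring
  · rw [inner_add_left, real_inner_smul_left,
      hw_orth (u i) (mem_insert_of_mem _ (mem_range_self i)), mul_zero, add_zero]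

theorem setOf_norm_le_one_and_inner_gt_subset_ball {y : E} (hy : ‖y‖ = 1) {r : ℝ}
    (hr : 0 ≤ r) : {x : E | ‖x‖ ≤ 1 ∧ 1 - r ^ 2 / 2 < ⟪x, y⟫} ⊆ ball y r := by
  rintro x ⟨hx, hxy⟩
  rw [mem_ball, dist_eq_norm, ← sq_lt_sq₀ (norm_nonneg _) hr, norm_sub_sq_real, hy]
  nlinarith [norm_nonneg x]

end

theorem open_halfspaces_form_base_general
    {E : Type*} [NormedAddCommGroup E] [InnerProductSpace ℝ E]
    (hinf : ¬ FiniteDimensional ℝ E)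
    {n : ℕ} (u : Fin n → E) (c : Fin n → ℝ)
    (hne : (⋂ i, {x : E | ‖x‖ ≤ 1 ∧ c i < (inner ℝ x (u i) : ℝ)}).Nonempty) :
    ∃ (v : E) (b : ℝ),
      {x : E | ‖x‖ ≤ 1 ∧ b < (inner ℝ x v : ℝ)}.Nonempty ∧
      {x : E | ‖x‖ ≤ 1 ∧ b < (inner ℝ x v : ℝ)} ⊆
        ⋂ i, {x : E | ‖x‖ ≤ 1 ∧ c i < (inner ℝ x (u i) : ℝ)} := by
  set S := ⋂ i, {x : E | c i < ⟪x, u i⟫}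
  obtain ⟨x₀, hx₀, hx₀S⟩ : ∃ x ∈ closedBall (0 : E) 1, x ∈ S := by
    obtain ⟨x, hx⟩ := hne
    simp only [mem_iInter, mem_ofPred_eq] at hx
    -- for `n = 0` the witness of `hne` need not lie in the ball
    rcases n.eq_zero_or_pos with rfl | hn
    · exact ⟨0, by simp, by simp [S]⟩
    · exact ⟨x, by simpa using (hx ⟨0, hn⟩).1, mem_iInter.2 fun i ↦ (hx i).2⟩
  obtain ⟨y, hy, hyu⟩ :=
    exists_norm_eq_one_forall_inner_eq hinf u (mem_closedBall_zero_iff.1 hx₀)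
  have hyS : y ∈ S := by simpa only [S, mem_iInter, mem_ofPred_eq, hyu] using hx₀S
  have hS : IsOpen S := isOpen_iInter_of_finite fun i ↦
    isOpen_lt continuous_const (continuous_id.inner continuous_const)
  obtain ⟨r, hr, hball⟩ := Metric.isOpen_iff.1 hS y hyS
  refine ⟨y, 1 - r ^ 2 / 2, ⟨y, hy.le, ?_⟩, fun x hx ↦ ?_⟩
  · rw [real_inner_self_eq_norm_sq, hy]
    linarith [pow_pos hr 2]
  · have hxS := mem_iInter.1 (hball (setOf_norm_le_one_and_inner_gt_subset_ball hy hr.le hx))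
    exact mem_iInter.2 fun i ↦ ⟨hx.1, hxS i⟩

/-- In the closed unit ball `D̄` of an infinite-dimensional separable Hilbert space,
the open half-spaces `{x ∈ D̄ : ⟨x,u⟩ > c}` form a base of the weak topology: any
nonempty finite intersection of open half-spaces contains a nonempty open half-space. -/
theorem open_halfspaces_form_base
    {E : Type*} [NormedAddCommGroup E] [InnerProductSpace ℝ E] [CompleteSpace E]
    [TopologicalSpace.SeparableSpace E] (hinf : ¬ FiniteDimensional ℝ E)
    {n : ℕ} (u : Fin n → E) (c : Fin n → ℝ)
    (hne : (⋂ i, {x : E | ‖x‖ ≤ 1 ∧ c i < (inner ℝ x (u i) : ℝ)}).Nonempty) :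
    ∃ (v : E) (b : ℝ),
      {x : E | ‖x‖ ≤ 1 ∧ b < (inner ℝ x v : ℝ)}.Nonempty ∧
      {x : E | ‖x‖ ≤ 1 ∧ b < (inner ℝ x v : ℝ)} ⊆
        ⋂ i, {x : E | ‖x‖ ≤ 1 ∧ c i < (inner ℝ x (u i) : ℝ)} :=
  open_halfspaces_form_base_general hinf u c hne
end

section
/- The unit sphere ∂D is comeager in the closed unit ball D̄ of an infinite-dimensional separable Hilbert space endowed with the weak topology; equivalently, the open unit ball is meager in (D̄, weak topology). -/
/-!
The norm is weakly lower semicontinuous (by Hahn–Banach it is a supremum of continuous linear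
functionals), so the unit sphere, which inside the closed ball is `{x | 1 ≤ ‖x‖}`, is a weak
`G_δ`. It is also weakly dense in the ball: a basic weak neighbourhood of `x` only constrains
finitely many functionals, and in infinite dimension their common kernel contains some `z ≠ 0`,
along which the line `t ↦ x + t • z` leaves the ball and hence meets the sphere. A dense `G_δ`
is comeagre.
-/

open Set Filter Topology

theorem LowerSemicontinuous.isGδ_setOf_le {X : Type*} [TopologicalSpace X] {f : X → ℝ}
    (hf : LowerSemicontinuous f) (a : ℝ) : IsGδ {x | a ≤ f x} := by
  have hset : {x | a ≤ f x} = ⋂ n : ℕ, f ⁻¹' Ioi (a - 1 / (n + 1)) := by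
    ext x
    simp only [mem_ofPred_eq, mem_iInter, mem_preimage, mem_Ioi]
    refine ⟨fun h n => by linarith [Nat.one_div_pos_of_nat (α := ℝ) (n := n)], fun h => ?_⟩
    by_contra! hlt
    obtain ⟨n, hn⟩ := exists_nat_one_div_lt (sub_pos.mpr hlt)
    linarith [h n]
  rw [hset]
  exact .iInter_of_isOpen fun n => hf.isOpen_preimage _

theorem Topology.IsInducing.dense_of_forall_finset_exists_eq {X ι : Type*} {π : ι → Type*}
    [TopologicalSpace X] [∀ i, TopologicalSpace (π i)] {g : X → ∀ i, π i} (hg : IsInducing g)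
    {s : Set X} (h : ∀ x (I : Finset ι), ∃ y ∈ s, ∀ i ∈ I, g y i = g x i) : Dense s := by
  intro x
  rw [mem_closure_iff_nhds, hg.nhds_eq_comap]
  rintro u ⟨t, ht, htu⟩
  rw [nhds_pi, mem_pi'] at ht
  obtain ⟨I, V, hV, hVt⟩ := ht
  obtain ⟨y, hys, hyx⟩ := h x I
  refine ⟨y, htu (hVt fun i hi => ?_), hys⟩
  rw [hyx i hi]
  exact mem_of_mem_nhds (hV i)

theorem exists_ne_zero_forall_apply_eq_zero {K V ι : Type*} [Field K] [AddCommGroup V]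
    [Module K V] [Finite ι] (hinf : ¬ FiniteDimensional K V) (f : ι → Module.Dual K V) :
    ∃ z ≠ 0, ∀ i, f i z = 0 := by
  have hker : LinearMap.ker (LinearMap.pi f) ≠ ⊥ := fun h =>
    hinf (.of_injective _ (LinearMap.ker_eq_bot.mp h))
  obtain ⟨z, hz, hz0⟩ := (Submodule.ne_bot_iff _).mp hker
  exact ⟨z, hz0, fun i => congr_fun (LinearMap.mem_ker.mp hz) i⟩

section NormedSpace

variable {E : Type*} [NormedAddCommGroup E] [NormedSpace ℝ E]

theorem exists_norm_add_smul_eq {x z : E} {r : ℝ} (hx : ‖x‖ ≤ r) (hz : z ≠ 0) :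
    ∃ t : ℝ, ‖x + t • z‖ = r := by
  have hz' : 0 < ‖z‖ := norm_pos_iff.mpr hz
  set T := (r + ‖x‖) / ‖z‖
  have hT : 0 ≤ T := div_nonneg (by linarith [norm_nonneg x]) hz'.le
  have hfar : r ≤ ‖x + T • z‖ :=
    calc r = ‖T • z‖ - ‖x‖ := by
          rw [norm_smul, Real.norm_of_nonneg hT, div_mul_cancel₀ _ hz'.ne']; ring
      _ ≤ ‖x + T • z‖ := by
          have h := norm_sub_le (x + T • z) x
          rw [add_sub_cancel_left] at h
          linarith
  have hcont : ContinuousOn (fun t : ℝ => ‖x + t • z‖) (Icc 0 T) := by fun_prop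
  obtain ⟨t, -, ht⟩ := intermediate_value_Icc hT hcont ⟨by simpa using hx, hfar⟩
  exact ⟨t, ht⟩

theorem exists_norm_eq_one_forall_apply_eq (hinf : ¬ FiniteDimensional ℝ E) {x : E}
    (hx : ‖x‖ ≤ 1) (s : Finset (E →L[ℝ] ℝ)) : ∃ y : E, ‖y‖ = 1 ∧ ∀ ℓ ∈ s, ℓ y = ℓ x := by
  obtain ⟨z, hz0, hz⟩ :=
    exists_ne_zero_forall_apply_eq_zero hinf fun ℓ : s => (ℓ : E →L[ℝ] ℝ).toLinearMap
  obtain ⟨t, ht⟩ := exists_norm_add_smul_eq hx hz0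
  refine ⟨x + t • z, ht, fun ℓ hℓ => ?_⟩
  have hℓz : ℓ z = 0 := hz ⟨ℓ, hℓ⟩
  rw [map_add, map_smul, hℓz, smul_zero, add_zero]

theorem lowerSemicontinuous_norm_of_continuous_eval {X : Type*} [TopologicalSpace X]
    {ι : X → E} (hι : Continuous fun x => fun ℓ : E →L[ℝ] ℝ => ℓ (ι x)) :
    LowerSemicontinuous fun x => ‖ι x‖ := by
  refine lowerSemicontinuous_iff_isClosed_preimage.mpr fun c => ?_
  rcases lt_or_ge c 0 with hc | hc
  · convert isClosed_empty
    exact eq_empty_of_forall_notMem fun x hx => (norm_nonneg _).not_gt (lt_of_le_of_lt hx hc)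
  have hset : (fun x => ‖ι x‖) ⁻¹' Iic c = ⋂ ℓ : E →L[ℝ] ℝ, {x | ‖ℓ (ι x)‖ ≤ c * ‖ℓ‖} := by
    ext x
    simp only [mem_preimage, mem_Iic, mem_iInter, mem_ofPred_eq]
    exact ⟨fun h ℓ => (ℓ.le_opNorm _).trans (by rw [mul_comm]; gcongr),
      NormedSpace.norm_le_dual_bound ℝ _ hc⟩
  rw [hset]
  exact isClosed_iInter fun ℓ =>
    isClosed_le ((continuous_apply ℓ).comp hι).norm continuous_const

end NormedSpace

theorem sphere_comeager_in_weak_ball_general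
    {E : Type*} [NormedAddCommGroup E] [InnerProductSpace ℝ E] (hinf : ¬ FiniteDimensional ℝ E) :
    letI : TopologicalSpace {x : E // ‖x‖ ≤ 1} :=
      TopologicalSpace.induced
        (fun x : {x : E // ‖x‖ ≤ 1} => fun ℓ : E →L[ℝ] ℝ => ℓ x.1) Pi.topologicalSpace
    {x : {x : E // ‖x‖ ≤ 1} | ‖x.1‖ = 1} ∈ residual {x : E // ‖x‖ ≤ 1} := by
  let : TopologicalSpace {x : E // ‖x‖ ≤ 1} :=
    TopologicalSpace.induced
      (fun x : {x : E // ‖x‖ ≤ 1} => fun ℓ : E →L[ℝ] ℝ => ℓ x.1) Pi.topologicalSpace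
  have hweak : IsInducing fun x : {x : E // ‖x‖ ≤ 1} => fun ℓ : E →L[ℝ] ℝ => ℓ x.1 := ⟨rfl⟩
  have hsphere : {x : {x : E // ‖x‖ ≤ 1} | ‖x.1‖ = 1} = {x | 1 ≤ ‖x.1‖} :=
    ext fun x => ⟨ge_of_eq, x.2.antisymm⟩
  have hGδ : IsGδ {x : {x : E // ‖x‖ ≤ 1} | ‖x.1‖ = 1} :=
    hsphere ▸ (lowerSemicontinuous_norm_of_continuous_eval hweak.continuous).isGδ_setOf_le 1
  have hdense : Dense {x : {x : E // ‖x‖ ≤ 1} | ‖x.1‖ = 1} :=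
    hweak.dense_of_forall_finset_exists_eq fun x I =>
      let ⟨y, hy, hyx⟩ := exists_norm_eq_one_forall_apply_eq hinf x.2 I
      ⟨⟨y, hy.le⟩, hy, hyx⟩
  exact residual_of_dense_Gδ hGδ hdense

/-- The unit sphere is comeager in the closed unit ball of an infinite-dimensional
separable real Hilbert space endowed with the weak topology (equivalently, the open
ball is meager). -/
theorem sphere_comeager_in_weak_ball
    {E : Type*} [NormedAddCommGroup E] [InnerProductSpace ℝ E] [CompleteSpace E]
    [TopologicalSpace.SeparableSpace E] (hinf : ¬ FiniteDimensional ℝ E) :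
    letI : TopologicalSpace {x : E // ‖x‖ ≤ 1} :=
      TopologicalSpace.induced
        (fun x : {x : E // ‖x‖ ≤ 1} => fun ℓ : E →L[ℝ] ℝ => ℓ x.1) Pi.topologicalSpace
    {x : {x : E // ‖x‖ ≤ 1} | ‖x.1‖ = 1} ∈ residual {x : E // ‖x‖ ≤ 1} :=
  sphere_comeager_in_weak_ball_general hinf
end

section
/- Every ball in infinite-dimensional hyperbolic space H has empty interior in the weak topology on H̄: no closed metric ball of H contains an open half-space of H̄. -/
/-!
A closed hyperbolic ball lies in the open unit ball, while every nonempty open half-space of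
`D̄` reaches the unit sphere `∂H`: in infinite dimensions a point `x` of the closed ball can be
pushed to the sphere along a unit vector orthogonal to `x` and to the normal `u` of the
half-space, without changing `⟪x, u⟫`. This is the weak density of the sphere in the ball.
-/

namespace Submodule

variable {E : Type*} [NormedAddCommGroup E] [InnerProductSpace ℝ E]

theorem exists_norm_eq_one_mem_orthogonal_s12 (hinf : ¬ FiniteDimensional ℝ E) (K : Submodule ℝ E)
    [FiniteDimensional ℝ K] : ∃ w ∈ Kᗮ, ‖w‖ = 1 := by
  have hK : Kᗮ ≠ ⊥ := fun h ↦ hinf <| by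
    rw [orthogonal_eq_bot_iff] at h
    subst h
    exact topEquiv.finiteDimensional
  obtain ⟨w, hw, hw0⟩ := exists_mem_ne_zero_of_ne_bot hK
  exact ⟨‖w‖⁻¹ • w, smul_mem _ _ hw, norm_smul_inv_norm hw0⟩

theorem exists_norm_eq_one_sub_mem_orthogonal (hinf : ¬ FiniteDimensional ℝ E)
    (K : Submodule ℝ E) [FiniteDimensional ℝ K] {x : E} (hx : ‖x‖ ≤ 1) :
    ∃ y : E, ‖y‖ = 1 ∧ y - x ∈ Kᗮ := by
  obtain ⟨w, hw, hw1⟩ := exists_norm_eq_one_mem_orthogonal_s12 hinf (K ⊔ ℝ ∙ x)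
  rw [← inf_orthogonal, mem_inf, mem_orthogonal_singleton_iff_inner_right] at hw
  set t := √(1 - ‖x‖ ^ 2)
  refine ⟨x + t • w, ?_, by simpa using smul_mem _ t hw.1⟩
  have hxw : inner ℝ x (t • w) = 0 := by rw [real_inner_smul_right, hw.2, mul_zero]
  have ht : t ^ 2 = 1 - ‖x‖ ^ 2 := Real.sq_sqrt (by nlinarith [norm_nonneg x])
  have hsq : ‖x + t • w‖ ^ 2 = 1 := by
    rw [norm_add_sq_real, hxw, norm_smul, hw1, mul_one, Real.norm_eq_abs, sq_abs, ht]
    ring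
  exact (pow_eq_one_iff_of_nonneg (norm_nonneg _) two_ne_zero).mp hsq

end Submodule

theorem hyperbolic_ball_contains_no_open_halfspace_general
    {E : Type*} [NormedAddCommGroup E] [InnerProductSpace ℝ E]
    (hinf : ¬ FiniteDimensional ℝ E)
    (p : E) (R : ℝ) (u : E) (c : ℝ)
    (hne : {x : E | ‖x‖ ≤ 1 ∧ c < (inner ℝ x u : ℝ)}.Nonempty) :
    ¬ ({x : E | ‖x‖ ≤ 1 ∧ c < (inner ℝ x u : ℝ)} ⊆
        {y : E | ‖y‖ < 1 ∧
          (1 - (inner ℝ p y : ℝ)) / (Real.sqrt (1 - ‖p‖ ^ 2) * Real.sqrt (1 - ‖y‖ ^ 2))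
            ≤ Real.cosh R}) := by
  intro hsub
  obtain ⟨x, hx1, hxc⟩ := hne
  obtain ⟨y, hy1, hyx⟩ := Submodule.exists_norm_eq_one_sub_mem_orthogonal hinf (ℝ ∙ u) hx1
  rw [Submodule.mem_orthogonal_singleton_iff_inner_right, inner_sub_right, sub_eq_zero,
    ← real_inner_comm u y, ← real_inner_comm u x] at hyx
  have hy : y ∈ {x : E | ‖x‖ ≤ 1 ∧ c < (inner ℝ x u : ℝ)} := ⟨hy1.le, hyx ▸ hxc⟩
  exact (hsub hy).1.ne hy1

/-- In the Klein model of infinite-dimensional hyperbolic space (the open unit ball of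
an infinite-dimensional Hilbert space, with `cosh d(p,y) = (1-⟨p,y⟩)/(√(1-‖p‖²)√(1-‖y‖²))`),
no closed hyperbolic ball contains a nonempty open half-space of `D̄`: metric balls have
empty interior for the weak topology on `H̄`. -/
theorem hyperbolic_ball_contains_no_open_halfspace
    {E : Type*} [NormedAddCommGroup E] [InnerProductSpace ℝ E] [CompleteSpace E]
    (hinf : ¬ FiniteDimensional ℝ E)
    (p : E) (hp : ‖p‖ < 1) (R : ℝ) (u : E) (c : ℝ)
    (hne : {x : E | ‖x‖ ≤ 1 ∧ c < (inner ℝ x u : ℝ)}.Nonempty) :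
    ¬ ({x : E | ‖x‖ ≤ 1 ∧ c < (inner ℝ x u : ℝ)} ⊆
        {y : E | ‖y‖ < 1 ∧
          (1 - (inner ℝ p y : ℝ)) / (Real.sqrt (1 - ‖p‖ ^ 2) * Real.sqrt (1 - ‖y‖ ^ 2))
            ≤ Real.cosh R}) :=
  hyperbolic_ball_contains_no_open_halfspace_general hinf p R u c hne
end

section
/- Let G be a topological group, A ⊴ G a normal subgroup that is extremely amenable (every continuous A-action on a compact Hausdorff space has a fixed point), and let G act continuously and minimally on a compact Hausdorff space X. Then A acts trivially on X, so the action factors through G/A. -/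
/-!
Extreme amenability gives a point fixed by `A`. The set of `A`-fixed points is closed, and it is
`G`-invariant because `A` is normal, so by minimality it is all of `X`.
-/

universe u v

open MulAction Set

section FixedPoints

variable {X : Type*} [TopologicalSpace X]

theorem MulAction.isClosed_fixedPoints {M : Type*} [Monoid M] [MulAction M X] [T2Space X]
    [ContinuousConstSMul M X] : IsClosed (fixedPoints M X) := by
  have hF : fixedPoints M X = ⋂ m : M, Function.fixedPoints (m • · : X → X) := by
    ext x
    simp only [mem_fixedPoints, mem_iInter, Function.mem_fixedPoints, Function.IsFixedPt]
  rw [hF]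
  exact isClosed_iInter fun m => _root_.isClosed_fixedPoints (continuous_const_smul m)

theorem MulAction.fixedPoints_eq_univ_of_isMinimal {G : Type*} [Group G] [TopologicalSpace G]
    [MulAction G X] [T2Space X] [ContinuousSMul G X] [IsMinimal G X] (H : Subgroup G) [H.Normal]
    (hne : (fixedPoints H X).Nonempty) :
    fixedPoints H X = univ :=
  (eq_empty_or_univ_of_smul_invariant_closed G isClosed_fixedPoints fun g =>
    smul_set_subset_iff.2 fun _ hx => smul_mem_fixedPoints_of_normal g hx).resolve_left
    hne.ne_empty

end FixedPoints

theorem extremely_amenable_normal_subgroup_acts_trivially_on_minimal_flow_general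
    {G : Type u} [Group G] [TopologicalSpace G]
    (A : Subgroup G) (hnorm : A.Normal)
    (hA : ∀ (Y : Type v) [TopologicalSpace Y] [CompactSpace Y] [T2Space Y] [Nonempty Y]
      (act : A → Y → Y),
      (∀ y : Y, act 1 y = y) →
      (∀ (a b : A) (y : Y), act (a * b) y = act a (act b y)) →
      Continuous (fun p : A × Y => act p.1 p.2) →
      ∃ y : Y, ∀ a : A, act a y = y)
    {X : Type v} [TopologicalSpace X] [CompactSpace X] [T2Space X] [Nonempty X]
    [MulAction G X] [ContinuousSMul G X]
    (hmin : ∀ x : X, Dense (MulAction.orbit G x)) :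
    ∀ a ∈ A, ∀ x : X, a • x = x := by
  have : IsMinimal G X := ⟨hmin⟩
  obtain ⟨y, hy⟩ := hA X (fun b z => b • z) (one_smul A) mul_smul continuous_smul
  have hF : fixedPoints A X = univ := fixedPoints_eq_univ_of_isMinimal A ⟨y, hy⟩
  intro a ha x
  exact (hF ▸ mem_univ x : x ∈ fixedPoints A X) ⟨a, ha⟩

/-- If `A` is an extremely amenable normal subgroup of a topological group `G` (every
continuous `A`-action on a nonempty compact Hausdorff space has a fixed point), then
for every minimal `G`-flow `X` the subgroup `A` acts trivially on `X`; hence the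
action factors through `G/A`. -/
theorem extremely_amenable_normal_subgroup_acts_trivially_on_minimal_flow
    {G : Type u} [Group G] [TopologicalSpace G] [IsTopologicalGroup G]
    (A : Subgroup G) (hnorm : A.Normal)
    (hA : ∀ (Y : Type v) [TopologicalSpace Y] [CompactSpace Y] [T2Space Y] [Nonempty Y]
      (act : A → Y → Y),
      (∀ y : Y, act 1 y = y) →
      (∀ (a b : A) (y : Y), act (a * b) y = act a (act b y)) →
      Continuous (fun p : A × Y => act p.1 p.2) →
      ∃ y : Y, ∀ a : A, act a y = y)
    {X : Type v} [TopologicalSpace X] [CompactSpace X] [T2Space X] [Nonempty X]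
    [MulAction G X] [ContinuousSMul G X]
    (hmin : ∀ x : X, Dense (MulAction.orbit G x)) :
    ∀ a ∈ A, ∀ x : X, a • x = x :=
  extremely_amenable_normal_subgroup_acts_trivially_on_minimal_flow_general A hnorm hA hmin
end
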